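/- Let n ≥ 1 and x ≥ n be integers. In the multi-jeep model with exactly n jeeps (no helpers), for every plan with x tankloads in which every jeep reaches a state with position ≥ d and every jeep is at position 0 in the final state, one has d ≤ 1/2 + (1/2)·Σ_{j=n+1}^{x} 1/j. -/

import Mathlib

/-- A state of the multi-jeep model with `N` jeeps: each jeep's position and
tank content, and a finitely supported function recording the fuel stored in
depots. -/
structure MultiState (N : ℕ) where
  pos : Fin N → ℝ
  tank : Fin N → ℝ
  depot : ℝ →₀ ℝ

/-- Admissible moves of the multi-jeep model: one jeep drives (consuming one
tankload of fuel per unit of distance), or fuel is moved between the tank of a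
jeep and the depot at its position, or between the tanks of two jeeps at the
same position; tank contents stay in `[0,1]` and depots stay nonnegative. -/
inductive MultiStep {N : ℕ} : MultiState N → MultiState N → Prop
  | drive (s : MultiState N) (i : Fin N) (p' : ℝ)
      (h : 0 ≤ s.tank i - |p' - s.pos i|) :
      MultiStep s ⟨Function.update s.pos i p',
        Function.update s.tank i (s.tank i - |p' - s.pos i|), s.depot⟩
  | transferDepot (s : MultiState N) (i : Fin N) (t' : ℝ) (D' : ℝ →₀ ℝ)
      (hcons : t' + D' (s.pos i) = s.tank i + s.depot (s.pos i))
      (ht0 : 0 ≤ t') (ht1 : t' ≤ 1)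
      (hD : ∀ q, 0 ≤ D' q)
      (heq : ∀ q, q ≠ s.pos i → D' q = s.depot q) :
      MultiStep s ⟨s.pos, Function.update s.tank i t', D'⟩
  | transferJeep (s : MultiState N) (i j : Fin N) (hij : i ≠ j)
      (hpos : s.pos i = s.pos j) (ti' tj' : ℝ)
      (hcons : ti' + tj' = s.tank i + s.tank j)
      (hi0 : 0 ≤ ti') (hi1 : ti' ≤ 1) (hj0 : 0 ≤ tj') (hj1 : tj' ≤ 1) :
      MultiStep s ⟨s.pos,
        Function.update (Function.update s.tank i ti') j tj', s.depot⟩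

/-- The initial state of a plan with `x` tankloads: all jeeps at position `0`
with empty tanks, and `x` tankloads of fuel at position `0`. -/
noncomputable def multiInit (N : ℕ) (x : ℝ) : MultiState N :=
  ⟨fun _ => 0, fun _ => 0, Finsupp.single 0 x⟩

/-! For `y ≥ 0` let `U y` be the total distance driven beyond `y` and `R y` the number of
rightward crossings of `y`. All fuel burnt beyond `y` was carried across `y`, at most one tankload
per crossing, so `U y ≤ R y`; every jeep crosses each `y < d`, so `R y ≥ n`; and since all jeeps
return, every rightward crossing is matched by a leftward one. On an interval `(a, b)` where no jeep
ever stops, every crossing traverses the whole interval, so `U a - U b ≥ 2 R a (b - a)`: morally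
`-U' ≥ 2 max n ⌈U⌉`. With the potential `reach n u = ∫₀ᵘ dt / (2 max n (⌊t⌋ + 1))` this makes
`y ↦ y + reach n (U y)` nonincreasing on `[0, d]`, whence `d ≤ reach n (U 0) ≤ reach n x`
as `U 0 ≤ x`. -/

open Finset

theorem Finset.le_of_le_on_gaps (E : Finset ℝ) {h : ℝ → ℝ} {a b : ℝ} (hab : a ≤ b)
    (hgap : ∀ y y', a ≤ y → y < y' → y' ≤ b → (∀ e ∈ E, e ∉ Set.Ioo y y') → h y' ≤ h y) :
    h b ≤ h a := by
  induction hc : #{e ∈ E | e ∈ Set.Ioo a b} using Nat.strong_induction_on generalizing a b with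
  | _ c ih =>
  by_cases hfree : ∀ e ∈ E, e ∉ Set.Ioo a b
  · rcases hab.eq_or_lt with rfl | hlt
    · exact le_rfl
    · exact hgap a b le_rfl hlt le_rfl hfree
  push Not at hfree
  obtain ⟨e, heE, hae, heb⟩ := hfree
  have hfewer : ∀ a' b', a ≤ a' → b' ≤ b → e ∉ Set.Ioo a' b' →
      #{e ∈ E | e ∈ Set.Ioo a' b'} < c := fun a' b' ha' hb' he => by
    rw [← hc]
    refine card_lt_card ((ssubset_iff_of_subset fun t ht => ?_).mpr ⟨e, ?_, ?_⟩)
    · simp only [mem_filter, Set.mem_Ioo] at ht ⊢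
      exact ⟨ht.1, ha'.trans_lt ht.2.1, ht.2.2.trans_le hb'⟩
    · simp [heE, hae, heb]
    · exact fun ht => he (mem_filter.mp ht).2
  have hleft : h e ≤ h a := ih _ (hfewer a e le_rfl heb.le (by simp)) hae.le
    (fun y y' hy hyy' hy' => hgap y y' hy hyy' (hy'.trans heb.le)) rfl
  have hright : h b ≤ h e := ih _ (hfewer e b hae.le le_rfl (by simp)) heb.le
    (fun y y' hy hyy' hy' => hgap y y' (hae.le.trans hy) hyy' hy') rfl
  exact hright.trans hleft

noncomputable def reachRate (n : ℕ) (t : ℝ) : ℝ := (2 * max (n : ℝ) (⌊t⌋₊ + 1))⁻¹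

noncomputable def reach (n : ℕ) (u : ℝ) : ℝ := ∫ t in (0 : ℝ)..u, reachRate n t

lemma reachRate_pos (n : ℕ) (t : ℝ) : 0 < reachRate n t := by
  unfold reachRate; positivity

lemma reachRate_antitone (n : ℕ) : Antitone (reachRate n) := fun s t hst => by
  unfold reachRate
  gcongr

lemma reachRate_intervalIntegrable (n : ℕ) (u v : ℝ) :
    IntervalIntegrable (reachRate n) MeasureTheory.volume u v :=
  (reachRate_antitone n).intervalIntegrable

lemma reach_sub_reach (n : ℕ) (u v : ℝ) :
    reach n v - reach n u = ∫ t in u..v, reachRate n t :=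
  intervalIntegral.integral_interval_sub_left (reachRate_intervalIntegrable n _ _)
    (reachRate_intervalIntegrable n _ _)

lemma reach_mono (n : ℕ) : Monotone (reach n) := fun u v huv => by
  rw [← sub_nonneg, reach_sub_reach]
  exact intervalIntegral.integral_nonneg huv fun t _ => (reachRate_pos n t).le

lemma reach_nonneg (n : ℕ) {u : ℝ} (hu : 0 ≤ u) : 0 ≤ reach n u := by
  simpa [reach] using reach_mono n hu

lemma div_le_reach_sub_reach {n r : ℕ} (hnr : n ≤ r) {u v : ℝ} (hu : 0 ≤ u) (huv : u ≤ v)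
    (hvr : v ≤ r) : (v - u) / (2 * r) ≤ reach n v - reach n u := by
  rw [reach_sub_reach, div_eq_mul_inv, ← smul_eq_mul, ← intervalIntegral.integral_const]
  refine intervalIntegral.integral_mono_on_of_le_Ioo huv intervalIntegrable_const
    (reachRate_intervalIntegrable n u v) fun t ht => ?_
  have hfloor : ⌊t⌋₊ + 1 ≤ r := Nat.floor_lt (hu.trans ht.1.le) |>.mpr (ht.2.trans_le hvr)
  unfold reachRate
  gcongr
  exact max_le (by exact_mod_cast hnr) (by exact_mod_cast hfloor)

lemma reach_le {n x : ℕ} (hn : 1 ≤ n) (hx : n ≤ x) :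
    reach n x ≤ 1 / 2 + 1 / 2 * ∑ l ∈ Icc (n + 1) x, 1 / (l : ℝ) := by
  induction x, hx using Nat.le_induction with
  | base =>
    have hle : reach n n ≤ ∫ _ in (0 : ℝ)..n, (2 * (n : ℝ))⁻¹ :=
      intervalIntegral.integral_mono_on (Nat.cast_nonneg n)
        (reachRate_intervalIntegrable n _ _) intervalIntegrable_const fun t _ => by
          unfold reachRate; gcongr; exact le_max_left _ _
    have hhalf : ((n : ℝ) - 0) • (2 * (n : ℝ))⁻¹ = 1 / 2 := by
      have hn0 : (n : ℝ) ≠ 0 := by positivity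
      rw [sub_zero, smul_eq_mul]
      field_simp
    rw [intervalIntegral.integral_const, hhalf] at hle
    simpa [Icc_eq_empty] using hle
  | succ x hx ih =>
    have hstep : reach n (x + 1) - reach n x ≤ reachRate n x := by
      rw [reach_sub_reach]
      calc ∫ t in (x : ℝ)..x + 1, reachRate n t ≤ ∫ _ in (x : ℝ)..x + 1, reachRate n x :=
            intervalIntegral.integral_mono_on (by linarith) (reachRate_intervalIntegrable n _ _)
              intervalIntegrable_const fun t ht => reachRate_antitone n ht.1
        _ = reachRate n x := by simp
    have hrate : reachRate n x = 1 / 2 * (1 / ((x + 1 : ℕ) : ℝ)) := by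
      rw [reachRate, Nat.floor_natCast, max_eq_right (by exact_mod_cast hx.trans (Nat.le_succ x))]
      push_cast; field_simp
    rw [sum_Icc_succ_top (by omega), mul_add]
    push_cast at hstep hrate ⊢
    linarith

/-- The length of the part beyond `y` of the segment between `p` and `q`. -/
noncomputable def lenAbove (p q y : ℝ) : ℝ := |max p y - max q y|

lemma lenAbove_self (p y : ℝ) : lenAbove p p y = 0 := by simp [lenAbove]

lemma lenAbove_comm (p q y : ℝ) : lenAbove p q y = lenAbove q p y := abs_sub_comm _ _

lemma lenAbove_nonneg (p q y : ℝ) : 0 ≤ lenAbove p q y := abs_nonneg _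

lemma lenAbove_eq_of_le {p q : ℝ} (h : p ≤ q) (y : ℝ) : lenAbove p q y = max q y - max p y := by
  rw [lenAbove, abs_sub_comm, abs_of_nonneg (sub_nonneg.mpr (max_le_max_right y h))]

lemma lenAbove_antitone (p q : ℝ) : Antitone (lenAbove p q) := by
  intro y y' hy
  wlog h : p ≤ q generalizing p q
  · simpa only [lenAbove_comm p q] using this q p (le_of_not_ge h)
  simp only [lenAbove_eq_of_le h, max_def]
  split_ifs <;> linarith

lemma lenAbove_sub_lenAbove {p q a b : ℝ} (hpa : p ≤ a) (hab : a ≤ b) (hbq : b ≤ q) :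
    lenAbove p q a - lenAbove p q b = b - a := by
  simp only [lenAbove, max_eq_right hpa, max_eq_right (hpa.trans hab), max_eq_left hbq,
    max_eq_left (hab.trans hbq), abs_of_nonpos (sub_nonpos.mpr (hab.trans hbq)),
    abs_of_nonpos (sub_nonpos.mpr hbq)]
  ring

lemma lenAbove_drive {p p' t y : ℝ} (ht : 0 ≤ t - |p' - p|) (ht1 : t ≤ 1) :
    (if y < p' then t - |p' - p| else 0) + lenAbove p p' y ≤
      (if y < p then t else 0) + if p ≤ y ∧ y < p' then 1 else 0 := by
  simp only [lenAbove, abs_eq_max_neg, max_def, ite_and] at ht ⊢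
  split_ifs at ht ⊢ <;> linarith

lemma crossing_mul_le_lenAbove_sub {p q a b z : ℝ} (hp : p ∉ Set.Ioo a b) (hq : q ∉ Set.Ioo a b)
    (haz : a ≤ z) (hzb : z < b) :
    ((if p ≤ z ∧ z < q then 1 else 0) + (if q ≤ z ∧ z < p then 1 else 0)) * (b - a) ≤
      lenAbove p q a - lenAbove p q b := by
  simp only [Set.mem_Ioo, not_and_or, not_lt] at hp hq
  have hanti := lenAbove_antitone p q (haz.trans hzb.le)
  split_ifs with hup hdown hdown
  · linarith [hup.2, hdown.1]
  · rw [lenAbove_sub_lenAbove (by rcases hp with h | h <;> linarith [hup.1])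
      (haz.trans hzb.le) (by rcases hq with h | h <;> linarith [hup.2])]
    norm_num
  · rw [lenAbove_comm p q, lenAbove_comm p q, lenAbove_sub_lenAbove
      (by rcases hq with h | h <;> linarith [hdown.1]) (haz.trans hzb.le)
      (by rcases hp with h | h <;> linarith [hdown.2])]
    norm_num
  · linarith

noncomputable def pathLenAbove (p : ℕ → ℝ) (m : ℕ) (y : ℝ) : ℝ :=
  ∑ j ∈ range m, lenAbove (p j) (p (j + 1)) y

noncomputable def upCrossings (p : ℕ → ℝ) (m : ℕ) (z : ℝ) : ℕ :=
  ∑ j ∈ range m, if p j ≤ z ∧ z < p (j + 1) then 1 else 0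

noncomputable def downCrossings (p : ℕ → ℝ) (m : ℕ) (z : ℝ) : ℕ :=
  ∑ j ∈ range m, if p (j + 1) ≤ z ∧ z < p j then 1 else 0

lemma pathLenAbove_nonneg (p : ℕ → ℝ) (m : ℕ) (y : ℝ) : 0 ≤ pathLenAbove p m y :=
  sum_nonneg fun _ _ => lenAbove_nonneg _ _ _

lemma pathLenAbove_antitone (p : ℕ → ℝ) (m : ℕ) : Antitone (pathLenAbove p m) :=
  fun _ _ h => sum_le_sum fun _ _ => lenAbove_antitone _ _ h

lemma upCrossings_sub_downCrossings (p : ℕ → ℝ) (m : ℕ) (z : ℝ) :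
    (upCrossings p m z : ℤ) - downCrossings p m z =
      (if z < p m then 1 else 0) - if z < p 0 then 1 else 0 := by
  induction m with
  | zero => simp [upCrossings, downCrossings]
  | succ m ih =>
    simp only [upCrossings, downCrossings, sum_range_succ, Nat.cast_add] at ih ⊢
    split_ifs at ih ⊢ <;> grind

lemma upCrossings_eq_downCrossings {p : ℕ → ℝ} {m : ℕ} {z : ℝ} (h0 : p 0 ≤ z) (hm : p m ≤ z) :
    upCrossings p m z = downCrossings p m z := by
  have := upCrossings_sub_downCrossings p m z
  rw [if_neg hm.not_gt, if_neg h0.not_gt] at this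
  omega

lemma upCrossings_mono (p : ℕ → ℝ) (z : ℝ) : Monotone fun m => upCrossings p m z :=
  fun _ _ h => sum_le_sum_of_subset (range_subset_range.mpr h)

lemma one_le_upCrossings {p : ℕ → ℝ} {j m : ℕ} {z : ℝ} (h0 : p 0 ≤ z) (hj : j ≤ m)
    (hz : z < p j) : 1 ≤ upCrossings p m z := by
  have := upCrossings_sub_downCrossings p j z
  rw [if_pos hz, if_neg h0.not_gt] at this
  exact (show 1 ≤ upCrossings p j z by omega).trans (upCrossings_mono p z hj)

lemma crossings_mul_le_pathLenAbove_sub {p : ℕ → ℝ} {m : ℕ} {a b z : ℝ}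
    (hfree : ∀ j ≤ m, p j ∉ Set.Ioo a b) (haz : a ≤ z) (hzb : z < b) :
    ((upCrossings p m z + downCrossings p m z : ℕ) : ℝ) * (b - a) ≤
      pathLenAbove p m a - pathLenAbove p m b := by
  simp only [upCrossings, downCrossings, pathLenAbove, ← sum_add_distrib, ← sum_sub_distrib,
    Nat.cast_sum, sum_mul]
  refine sum_le_sum fun j hj => ?_
  have hj : j < m := mem_range.mp hj
  push_cast
  exact crossing_mul_le_lenAbove_sub (hfree j hj.le) (hfree (j + 1) hj) haz hzb

lemma Finsupp.sum_ite_lt_sub_sum_ite_lt {D D' : ℝ →₀ ℝ} {p : ℝ} (h : ∀ q ≠ p, D' q = D q)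
    (y : ℝ) : (D'.sum fun q v => if y < q then v else 0) - (D.sum fun q v => if y < q then v else 0)
      = if y < p then D' p - D p else 0 := by
  have hdiff : D' - D = Finsupp.single p (D' p - D p) := by
    ext q
    rcases eq_or_ne q p with rfl | hq
    · simp
    · simp [h q hq, hq.symm]
  rw [← Finsupp.sum_sub_index (by intros; split_ifs <;> ring), hdiff,
    Finsupp.sum_single_index (by simp)]

namespace MultiState

variable {N : ℕ}

def Valid (s : MultiState N) : Prop := (∀ i, 0 ≤ s.tank i ∧ s.tank i ≤ 1) ∧ ∀ q, 0 ≤ s.depot q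

noncomputable def fuelAbove (s : MultiState N) (y : ℝ) : ℝ :=
  (∑ i, if y < s.pos i then s.tank i else 0) + s.depot.sum fun q v => if y < q then v else 0

lemma fuelAbove_nonneg {s : MultiState N} (hs : s.Valid) (y : ℝ) : 0 ≤ s.fuelAbove y := by
  refine add_nonneg (sum_nonneg fun i _ => ?_) (sum_nonneg fun q _ => ?_)
  · split_ifs <;> simp [(hs.1 i).1]
  · dsimp only
    split_ifs <;> simp [hs.2 q]

lemma valid_multiInit (N : ℕ) {x : ℝ} (hx : 0 ≤ x) : (multiInit N x).Valid :=
  ⟨fun _ => ⟨le_rfl, zero_le_one⟩, fun q => by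
    simp only [multiInit, Finsupp.single_apply]; split_ifs <;> simp [hx]⟩

lemma fuelAbove_multiInit (N : ℕ) (x y : ℝ) :
    (multiInit N x).fuelAbove y = if y < 0 then x else 0 := by
  rw [fuelAbove, multiInit, Finsupp.sum_single_index (by simp)]
  split_ifs <;> simp

end MultiState

open MultiState

lemma MultiStep.valid {N : ℕ} {s s' : MultiState N} (h : MultiStep s s') (hs : s.Valid) :
    s'.Valid := by
  obtain ⟨ht, hD⟩ := hs
  cases h with
  | drive i p' hfuel =>
    refine ⟨fun m => ?_, hD⟩
    rcases eq_or_ne m i with rfl | hm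
    · simp only [Function.update_self]
      exact ⟨hfuel, by linarith [abs_nonneg (p' - s.pos m), (ht m).2]⟩
    · simpa [Function.update_of_ne hm] using ht m
  | transferDepot i t' D' _ ht0 ht1 hD' _ =>
    refine ⟨fun m => ?_, hD'⟩
    rcases eq_or_ne m i with rfl | hm
    · simpa using ⟨ht0, ht1⟩
    · simpa [Function.update_of_ne hm] using ht m
  | transferJeep i j hij _ ti' tj' _ hi0 hi1 hj0 hj1 =>
    refine ⟨fun m => ?_, hD⟩
    simp only [Function.update_apply]
    split_ifs
    exacts [⟨hj0, hj1⟩, ⟨hi0, hi1⟩, ht m]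

lemma MultiStep.fuelAbove_add_le {N : ℕ} {s s' : MultiState N} (h : MultiStep s s')
    (hs : s.Valid) (y : ℝ) :
    s'.fuelAbove y + ∑ i, lenAbove (s.pos i) (s'.pos i) y ≤
      s.fuelAbove y + ∑ i, if s.pos i ≤ y ∧ y < s'.pos i then 1 else 0 := by
  have hstay : 0 ≤ ∑ i, if s.pos i ≤ y ∧ y < s.pos i then (1 : ℝ) else 0 :=
    sum_nonneg fun i _ => by split_ifs <;> norm_num
  cases h with
  | drive i p' hfuel =>
    have hjeep : ∀ m, (if y < Function.update s.pos i p' m then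
          Function.update s.tank i (s.tank i - |p' - s.pos i|) m else 0) +
        lenAbove (s.pos m) (Function.update s.pos i p' m) y ≤
        (if y < s.pos m then s.tank m else 0) +
          if s.pos m ≤ y ∧ y < Function.update s.pos i p' m then 1 else 0 := by
      intro m
      rcases eq_or_ne m i with rfl | hm
      · simpa using lenAbove_drive hfuel (hs.1 m).2
      · simp only [Function.update_of_ne hm, lenAbove_self, add_zero]
        exact le_add_of_nonneg_right (by split_ifs <;> norm_num)
    have := sum_le_sum (s := univ) fun m _ => hjeep m
    simp only [sum_add_distrib] at this
    simp only [fuelAbove]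
    linarith
  | transferDepot i t' D' hcons _ _ _ heq =>
    have hfuel : fuelAbove ⟨s.pos, Function.update s.tank i t', D'⟩ y = s.fuelAbove y := by
      have hdep := Finsupp.sum_ite_lt_sub_sum_ite_lt heq y
      have htank : (∑ m, if y < s.pos m then Function.update s.tank i t' m else 0) -
          ∑ m, (if y < s.pos m then s.tank m else 0) = if y < s.pos i then t' - s.tank i else 0 := by
        rw [← sum_sub_distrib, Fintype.sum_eq_single i fun m hm => by
          simp [Function.update_of_ne hm]]
        split_ifs <;> simp
      simp only [fuelAbove]
      split_ifs at hdep htank <;> linarith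
    simp only [lenAbove_self, sum_const_zero, add_zero, hfuel]
    linarith
  | transferJeep i j hij hpos ti' tj' hcons _ _ _ _ =>
    have hfuel : fuelAbove ⟨s.pos, Function.update (Function.update s.tank i ti') j tj', s.depot⟩ y
        = s.fuelAbove y := by
      have htank : (∑ m, if y < s.pos m then
            Function.update (Function.update s.tank i ti') j tj' m else 0) -
          ∑ m, (if y < s.pos m then s.tank m else 0) = 0 := by
        rw [← sum_sub_distrib, Fintype.sum_eq_add i j hij fun m hm => by
          simp [Function.update_of_ne hm.1, Function.update_of_ne hm.2]]
        simp only [Function.update_self, Function.update_of_ne hij, hpos]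
        split_ifs <;> linarith
      simp only [fuelAbove]
      linarith
    simp only [lenAbove_self, sum_const_zero, add_zero, hfuel]
    linarith

section Plan

variable {N : ℕ} {f : ℕ → MultiState N} {k : ℕ}

noncomputable def planLenAbove (f : ℕ → MultiState N) (m : ℕ) (y : ℝ) : ℝ :=
  ∑ i, pathLenAbove (fun j => (f j).pos i) m y

noncomputable def planUpCrossings (f : ℕ → MultiState N) (m : ℕ) (z : ℝ) : ℕ :=
  ∑ i, upCrossings (fun j => (f j).pos i) m z

noncomputable def planPositions (f : ℕ → MultiState N) (k : ℕ) : Finset ℝ :=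
  (range (k + 1) ×ˢ univ).image fun ji => (f ji.1).pos ji.2

lemma pos_mem_planPositions {j : ℕ} (hj : j ≤ k) (i : Fin N) :
    (f j).pos i ∈ planPositions f k :=
  mem_image.mpr ⟨(j, i), by simp [Nat.lt_succ_iff.mpr hj], rfl⟩

lemma planLenAbove_nonneg (f : ℕ → MultiState N) (m : ℕ) (y : ℝ) : 0 ≤ planLenAbove f m y :=
  sum_nonneg fun _ _ => pathLenAbove_nonneg _ _ _

lemma planLenAbove_antitone (f : ℕ → MultiState N) (m : ℕ) : Antitone (planLenAbove f m) :=
  fun _ _ h => sum_le_sum fun _ _ => pathLenAbove_antitone _ _ h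

lemma valid_of_multiStep (h0 : (f 0).Valid) (hstep : ∀ j < k, MultiStep (f j) (f (j + 1))) :
    ∀ j ≤ k, (f j).Valid := by
  intro j hj
  induction j with
  | zero => exact h0
  | succ j ih => exact (hstep j hj).valid (ih (by omega))

/-- Fuel beyond `y` only arrives in a tank crossing `y` rightwards, at most one tankload per
crossing, and driving beyond `y` burns it. -/
lemma fuelAbove_add_planLenAbove_le (hvalid : ∀ j ≤ k, (f j).Valid)
    (hstep : ∀ j < k, MultiStep (f j) (f (j + 1))) (y : ℝ) :
    ∀ m ≤ k, (f m).fuelAbove y + planLenAbove f m y ≤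
      (f 0).fuelAbove y + planUpCrossings f m y := by
  intro m hm
  induction m with
  | zero => simp [planLenAbove, planUpCrossings, pathLenAbove, upCrossings]
  | succ m ih =>
    have hmove := (hstep m hm).fuelAbove_add_le (hvalid m (by omega)) y
    simp only [planLenAbove, planUpCrossings, pathLenAbove, upCrossings, sum_range_succ,
      sum_add_distrib, Nat.cast_add, Nat.cast_sum, Nat.cast_ite, Nat.cast_one,
      Nat.cast_zero] at ih hmove ⊢
    linarith [ih (by omega)]

lemma planLenAbove_le_planUpCrossings (hvalid : ∀ j ≤ k, (f j).Valid)
    (hstep : ∀ j < k, MultiStep (f j) (f (j + 1))) {y : ℝ} (hy : (f 0).fuelAbove y = 0) :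
    planLenAbove f k y ≤ planUpCrossings f k y := by
  have := fuelAbove_add_planLenAbove_le hvalid hstep y k le_rfl
  linarith [(f k).fuelAbove_nonneg (hvalid k le_rfl) y]

/-- Below all positions nothing is ever crossed, so the total distance driven is at most the
initial fuel. -/
lemma planLenAbove_zero_le {x : ℝ} (h0 : f 0 = multiInit N x) (hvalid : ∀ j ≤ k, (f j).Valid)
    (hstep : ∀ j < k, MultiStep (f j) (f (j + 1))) : planLenAbove f k 0 ≤ x := by
  obtain ⟨L, hL⟩ := (planPositions f k).bddBelow
  set y := min L 0 - 1
  have hy0 : y < 0 := by linarith [min_le_right L 0]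
  have hy : ∀ j ≤ k, ∀ i, y < (f j).pos i := fun j hj i =>
    (by linarith [min_le_left L 0] : y < L).trans_le (hL (pos_mem_planPositions hj i))
  have hnocross : planUpCrossings f k y = 0 :=
    sum_eq_zero fun i _ => sum_eq_zero fun j hj => if_neg fun hc =>
      (hy j (mem_range.mp hj).le i).not_ge hc.1
  have := fuelAbove_add_planLenAbove_le hvalid hstep y k le_rfl
  rw [hnocross, Nat.cast_zero, add_zero, h0, fuelAbove_multiInit, if_pos hy0] at this
  linarith [(f k).fuelAbove_nonneg (hvalid k le_rfl) y, planLenAbove_antitone f k hy0.le]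

lemma le_planUpCrossings {z : ℝ} (hstart : ∀ i, (f 0).pos i ≤ z)
    (hreach : ∀ i, ∃ j ≤ k, z < (f j).pos i) : N ≤ planUpCrossings f k z := by
  calc N = ∑ _i : Fin N, 1 := by simp
    _ ≤ planUpCrossings f k z := sum_le_sum fun i _ => by
      obtain ⟨j, hj, hz⟩ := hreach i
      exact one_le_upCrossings (hstart i) hj hz

lemma two_mul_planUpCrossings_mul_le {a b : ℝ} (hab : a < b)
    (hfree : ∀ j ≤ k, ∀ i, (f j).pos i ∉ Set.Ioo a b) (hstart : ∀ i, (f 0).pos i ≤ a)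
    (hend : ∀ i, (f k).pos i ≤ a) :
    2 * (planUpCrossings f k a : ℝ) * (b - a) ≤ planLenAbove f k a - planLenAbove f k b := by
  simp only [planUpCrossings, planLenAbove, Nat.cast_sum, mul_sum, sum_mul, ← sum_sub_distrib]
  refine sum_le_sum fun i _ => ?_
  have := crossings_mul_le_pathLenAbove_sub (fun j hj => hfree j hj i) le_rfl hab
  rwa [← upCrossings_eq_downCrossings (hstart i) (hend i), ← two_mul, Nat.cast_mul,
    Nat.cast_two] at this

lemma sub_le_reach_sub (hN : 1 ≤ N) (hvalid : ∀ j ≤ k, (f j).Valid)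
    (hstep : ∀ j < k, MultiStep (f j) (f (j + 1))) {a b : ℝ} (hab : a < b)
    (hfuel : (f 0).fuelAbove a = 0) (hstart : ∀ i, (f 0).pos i ≤ a)
    (hend : ∀ i, (f k).pos i ≤ a) (hreach : ∀ i, ∃ j ≤ k, b ≤ (f j).pos i)
    (hfree : ∀ j ≤ k, ∀ i, (f j).pos i ∉ Set.Ioo a b) :
    b - a ≤ reach N (planLenAbove f k a) - reach N (planLenAbove f k b) := by
  set r := planUpCrossings f k a
  have hfuel_le : planLenAbove f k a ≤ r := planLenAbove_le_planUpCrossings hvalid hstep hfuel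
  have hNr : N ≤ r := le_planUpCrossings hstart fun i =>
    (hreach i).imp fun j hj => ⟨hj.1, hab.trans_le hj.2⟩
  have hburn := two_mul_planUpCrossings_mul_le hab hfree hstart hend
  have hr : (0 : ℝ) < r := by exact_mod_cast hN.trans hNr
  calc b - a ≤ (planLenAbove f k a - planLenAbove f k b) / (2 * r) := by
        rw [le_div_iff₀ (by positivity)]; linarith
    _ ≤ _ := div_le_reach_sub_reach hNr (planLenAbove_nonneg f k b)
        (planLenAbove_antitone f k hab.le) hfuel_le

lemma le_reach_planLenAbove (hN : 1 ≤ N) {x d : ℝ} (h0 : f 0 = multiInit N x)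
    (hvalid : ∀ j ≤ k, (f j).Valid) (hstep : ∀ j < k, MultiStep (f j) (f (j + 1)))
    (hreach : ∀ i, ∃ j ≤ k, d ≤ (f j).pos i) (hreturn : ∀ i, (f k).pos i = 0) :
    d ≤ reach N (planLenAbove f k 0) := by
  rcases le_or_gt d 0 with hd | hd
  · exact hd.trans (reach_nonneg N (planLenAbove_nonneg f k 0))
  have hstart : ∀ i, (f 0).pos i = 0 := by simp [h0, multiInit]
  have hgaps := (planPositions f k).le_of_le_on_gaps
    (h := fun y => y + reach N (planLenAbove f k y)) hd.le fun y y' hy hyy' hy'd hfree => by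
      have := sub_le_reach_sub hN hvalid hstep hyy'
        (by rw [h0, fuelAbove_multiInit, if_neg hy.not_gt])
        (fun i => (hstart i).trans_le hy) (fun i => (hreturn i).trans_le hy)
        (fun i => (hreach i).imp fun j hj => ⟨hj.1, hy'd.trans hj.2⟩)
        (fun j hj i hmem => hfree _ (pos_mem_planPositions hj i) hmem)
      linarith
  linarith [reach_nonneg N (planLenAbove_nonneg f k d)]

end Plan

/-- With exactly `n ≥ 1` jeeps and `x ≥ n` tankloads, for every plan in which
every jeep reaches a state with position `≥ d` and every jeep is at position
`0` in the final state, one has `d ≤ 1/2 + (1/2)·Σ_{j=n+1}^{x} 1/j`. -/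
theorem multi_roundtrip_bound (n x : ℕ) (hn : 1 ≤ n) (hx : n ≤ x)
    (d : ℝ) (k : ℕ) (f : ℕ → MultiState n)
    (h0 : f 0 = multiInit n (x : ℝ))
    (hstep : ∀ j < k, MultiStep (f j) (f (j + 1)))
    (hreach : ∀ i : Fin n, ∃ j ≤ k, d ≤ (f j).pos i)
    (hreturn : ∀ i : Fin n, (f k).pos i = 0) :
    d ≤ 1 / 2 + 1 / 2 * ∑ l ∈ Finset.Icc (n + 1) x, 1 / (l : ℝ) := by
  have hvalid := valid_of_multiStep (h0 ▸ valid_multiInit n (Nat.cast_nonneg x)) hstep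
  calc d ≤ reach n (planLenAbove f k 0) :=
        le_reach_planLenAbove hn h0 hvalid hstep hreach hreturn
    _ ≤ reach n x := reach_mono n (planLenAbove_zero_le h0 hvalid hstep)
    _ ≤ _ := reach_le hn hx
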